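/- arXiv:2008.07390 — 2 statements merged into one kernel-verified Lean document; each statement's English description precedes it below -/
import Mathlib

section
/- Let γ : I → ℝ^{n+2} be a C² unit-speed curve with small acceleration in ℍ^{n+1}. Let t₀ ∈ I and let ξ ∈ ℝ^{n+2} be a nonzero vector with ⟨ξ,ξ⟩ = 0, ⟨γ(t₀), ξ⟩ = −1 and ⟨γ'(t₀), ξ⟩ = 0 (i.e. the horosphere H_ξ = {x ∈ ℍ^{n+1} : ⟨x,ξ⟩ = −1} is tangent to γ at γ(t₀)). Then ⟨γ(t), ξ⟩ < −1 for every t ∈ I with t ≠ t₀; that is, γ lies in the interior of the concave side of every tangent horosphere, except at the tangency point. -/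
/-- The Minkowski bilinear form on `ℝ^{n+2}`:
`⟨x,y⟩ = x₁y₁ + ⋯ + x_{n+1}y_{n+1} − x_{n+2}y_{n+2}`. -/
noncomputable def mink (n : ℕ) (x y : Fin (n + 2) → ℝ) : ℝ :=
  (∑ i : Fin (n + 1), x i.castSucc * y i.castSucc) -
    x (Fin.last (n + 1)) * y (Fin.last (n + 1))

/-!
Put `f t = ⟨γ t, ξ⟩`. A nonzero null vector is never orthogonal to a timelike one, so `f` does
not vanish on `I` and hence `f < 0`. The covariant acceleration `a = γ'' - γ` is tangent to `ℍ`
at `γ`, and Cauchy–Schwarz in the spacelike hyperplane `γ^⊥`, applied to `a` and the projection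
of `ξ`, gives `⟨a, ξ⟩² ≤ ⟨a, a⟩ f² < f²`. Thus `f'' = f + ⟨a, ξ⟩ < 0`, so `f` is strictly concave
with a critical point at `t₀`, where `f = -1`.
-/

section Algebra

variable {n : ℕ}

lemma mink_comm (x y : Fin (n + 2) → ℝ) : mink n x y = mink n y x := by
  simp only [mink, mul_comm]

lemma mink_add_left (x y z : Fin (n + 2) → ℝ) :
    mink n (x + y) z = mink n x z + mink n y z := by
  simp only [mink, Pi.add_apply, add_mul, Finset.sum_add_distrib]; ring

lemma mink_sub_left (x y z : Fin (n + 2) → ℝ) :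
    mink n (x - y) z = mink n x z - mink n y z := by
  simp only [mink, Pi.sub_apply, sub_mul, Finset.sum_sub_distrib]; ring

lemma mink_smul_left (c : ℝ) (x z : Fin (n + 2) → ℝ) :
    mink n (c • x) z = c * mink n x z := by
  simp only [mink, Pi.smul_apply, smul_eq_mul, Finset.mul_sum, mul_sub, mul_assoc]

lemma mink_add_right (x y z : Fin (n + 2) → ℝ) :
    mink n z (x + y) = mink n z x + mink n z y := by
  rw [mink_comm, mink_add_left, mink_comm x, mink_comm y]

lemma mink_sub_right (x y z : Fin (n + 2) → ℝ) :
    mink n z (x - y) = mink n z x - mink n z y := by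
  rw [mink_comm, mink_sub_left, mink_comm x, mink_comm y]

lemma mink_smul_right (c : ℝ) (x z : Fin (n + 2) → ℝ) :
    mink n z (c • x) = c * mink n z x := by
  rw [mink_comm, mink_smul_left, mink_comm]

@[simp]
lemma mink_zero_right (x : Fin (n + 2) → ℝ) : mink n x 0 = 0 := by
  simp [mink]

/- The Euclidean Cauchy–Schwarz inequality for the first `n + 1` coordinates gives
`vₗ² pₗ² ≤ |v̄|² |p̄|²`, which together with `|p̄|² < pₗ²` forces `|v̄|² > vₗ²` unless `v = 0`. -/
lemma mink_self_pos_of_orthogonal {p v : Fin (n + 2) → ℝ} (hp : mink n p p < 0)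
    (hvp : mink n v p = 0) (hv : v ≠ 0) : 0 < mink n v v := by
  unfold mink at *
  set A := ∑ i : Fin (n + 1), v i.castSucc * v i.castSucc
  set B := ∑ i : Fin (n + 1), p i.castSucc * p i.castSucc
  have hCS : (∑ i : Fin (n + 1), v i.castSucc * p i.castSucc) ^ 2 ≤ A * B := by
    simpa only [sq] using Finset.sum_mul_sq_le_sq_mul_sq Finset.univ
      (fun i : Fin (n + 1) => v i.castSucc) (fun i : Fin (n + 1) => p i.castSucc)
  have hA : 0 ≤ A := Finset.sum_nonneg fun i _ => mul_self_nonneg _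
  have hB : 0 ≤ B := Finset.sum_nonneg fun i _ => mul_self_nonneg _
  by_contra! h
  have hC : ∑ i : Fin (n + 1), v i.castSucc * p i.castSucc =
      v (Fin.last (n + 1)) * p (Fin.last (n + 1)) := by linarith
  have hlast : v (Fin.last (n + 1)) = 0 := by
    have hAB := mul_le_mul_of_nonneg_right (sub_nonpos.mp h) hB
    rw [hC] at hCS
    have : v (Fin.last (n + 1)) * v (Fin.last (n + 1)) *
        (p (Fin.last (n + 1)) * p (Fin.last (n + 1)) - B) ≤ 0 := by nlinarith
    exact mul_self_eq_zero.mp (le_antisymm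
      (nonpos_of_mul_nonpos_left this (by linarith)) (mul_self_nonneg _))
  have hA0 : A = 0 := by nlinarith
  have hinit : ∀ i : Fin (n + 1), v i.castSucc = 0 := fun i =>
    mul_self_eq_zero.mp ((Finset.sum_eq_zero_iff_of_nonneg fun j _ => mul_self_nonneg _).mp hA0
      i (Finset.mem_univ i))
  exact hv (funext fun i => Fin.lastCases hlast hinit i)

lemma mink_self_nonneg_of_orthogonal {p v : Fin (n + 2) → ℝ} (hp : mink n p p < 0)
    (hvp : mink n v p = 0) : 0 ≤ mink n v v := by
  rcases eq_or_ne v 0 with rfl | hv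
  · exact (mink_zero_right 0).ge
  · exact (mink_self_pos_of_orthogonal hp hvp hv).le

lemma mink_ne_zero_of_null {p ξ : Fin (n + 2) → ℝ} (hp : mink n p p < 0) (hξ : ξ ≠ 0)
    (hnull : mink n ξ ξ = 0) : mink n p ξ ≠ 0 := fun h =>
  (mink_self_pos_of_orthogonal hp ((mink_comm ξ p).trans h) hξ).ne' hnull

lemma mink_sq_le_of_orthogonal {p a w : Fin (n + 2) → ℝ} (hp : mink n p p < 0)
    (ha : mink n a p = 0) (hw : mink n w p = 0) :
    mink n a w ^ 2 ≤ mink n a a * mink n w w := by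
  have hquad : ∀ x : ℝ, 0 ≤ mink n w w * (x * x) + (-2 * mink n a w) * x + mink n a a := by
    intro x
    have h := mink_self_nonneg_of_orthogonal (v := a - x • w) hp
      (by rw [mink_sub_left, mink_smul_left, ha, hw]; ring)
    rw [mink_sub_left, mink_sub_right, mink_sub_right, mink_smul_left, mink_smul_left,
      mink_smul_right, mink_smul_right, mink_comm w a] at h
    linarith
  have := discrim_le_zero hquad
  rw [discrim] at this
  linarith

/- `ξ + ⟨p, ξ⟩ p` is the projection of `ξ` to the tangent space `p^⊥`; for null `ξ` its
Minkowski square is `⟨p, ξ⟩²`. -/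
lemma mink_sq_le_of_null {p a ξ : Fin (n + 2) → ℝ} (hp : mink n p p = -1)
    (ha : mink n a p = 0) (hnull : mink n ξ ξ = 0) :
    mink n a ξ ^ 2 ≤ mink n a a * mink n p ξ ^ 2 := by
  have hw : mink n (ξ + mink n p ξ • p) p = 0 := by
    rw [mink_add_left, mink_smul_left, hp, mink_comm]; ring
  have h := mink_sq_le_of_orthogonal (by rw [hp]; norm_num) ha hw
  rw [mink_add_right, mink_smul_right, ha, mul_zero, add_zero] at h
  simp only [mink_add_left, mink_add_right, mink_smul_left, mink_smul_right, hp, hnull,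
    mink_comm ξ p] at h
  linarith

lemma mink_add_lt_zero_of_null {p a ξ : Fin (n + 2) → ℝ} (hp : mink n p p = -1)
    (ha : mink n a p = 0) (haa : mink n a a < 1) (hnull : mink n ξ ξ = 0)
    (hpξ : mink n p ξ < 0) : mink n (a + p) ξ < 0 := by
  have h := mink_sq_le_of_null hp ha hnull
  have hsq : mink n a ξ ^ 2 < mink n p ξ ^ 2 :=
    h.trans_lt (by nlinarith [pow_pos (neg_pos.mpr hpξ) 2])
  rw [mink_add_left]
  nlinarith

end Algebra

section Calculus

variable {n : ℕ}

lemma HasDerivWithinAt.mink {u v : ℝ → Fin (n + 2) → ℝ} {u' v' : Fin (n + 2) → ℝ}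
    {s : Set ℝ} {t : ℝ} (hu : HasDerivWithinAt u u' s t) (hv : HasDerivWithinAt v v' s t) :
    HasDerivWithinAt (fun r => mink n (u r) (v r)) (mink n u' (v t) + mink n (u t) v') s t := by
  have hui := hasDerivWithinAt_pi.mp hu
  have hvi := hasDerivWithinAt_pi.mp hv
  refine ((HasDerivWithinAt.fun_sum fun (i : Fin (n + 1)) _ =>
    (hui i.castSucc).mul (hvi i.castSucc)).sub
      ((hui (Fin.last (n + 1))).mul (hvi (Fin.last (n + 1))))).congr_deriv ?_
  simp only [_root_.mink, Finset.sum_add_distrib]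
  ring

lemma lt_of_hasDerivWithinAt_of_strictAntiOn {I : Set ℝ} (hI : I.OrdConnected) {f f' : ℝ → ℝ}
    (hf : ∀ t ∈ I, HasDerivWithinAt f (f' t) I t) (hf' : StrictAntiOn f' I) {t₀ t : ℝ}
    (ht₀ : t₀ ∈ I) (hcrit : f' t₀ = 0) (ht : t ∈ I) (hne : t ≠ t₀) : f t < f t₀ := by
  have hcont : ContinuousOn f I := fun x hx => (hf x hx).continuousWithinAt
  have hderiv : ∀ {a b}, a ∈ I → b ∈ I →
      ∀ x ∈ interior (Set.Icc a b), HasDerivWithinAt f (f' x) (interior (Set.Icc a b)) x :=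
    fun ha hb x hx =>
      (hf x (hI.out ha hb (interior_subset hx))).mono (interior_subset.trans (hI.out ha hb))
  have hmem : ∀ {a b}, a ∈ I → b ∈ I → ∀ x ∈ interior (Set.Icc a b), x ∈ I :=
    fun ha hb x hx => hI.out ha hb (interior_subset hx)
  rcases hne.lt_or_gt with hlt | hgt
  · refine strictMonoOn_of_hasDerivWithinAt_pos (convex_Icc t t₀) (hcont.mono (hI.out ht ht₀))
      (hderiv ht ht₀) (fun x hx => ?_) ⟨le_rfl, hlt.le⟩ ⟨hlt.le, le_rfl⟩ hlt
    rw [← hcrit]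
    exact hf' (hmem ht ht₀ x hx) ht₀ (interior_Icc.subset hx).2
  · refine strictAntiOn_of_hasDerivWithinAt_neg (convex_Icc t₀ t) (hcont.mono (hI.out ht₀ ht))
      (hderiv ht₀ ht) (fun x hx => ?_) ⟨le_rfl, hgt.le⟩ ⟨hgt.le, le_rfl⟩ hgt
    rw [← hcrit]
    exact hf' ht₀ (hmem ht₀ ht x hx) (interior_Icc.subset hx).1

end Calculus

section Curve

variable {n : ℕ} {I : Set ℝ} {γ γ' γ'' : ℝ → Fin (n + 2) → ℝ}

lemma mink_deriv_self_eq_zero (hd1 : ∀ t ∈ I, HasDerivWithinAt γ (γ' t) I t)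
    (hhyp : ∀ t ∈ I, mink n (γ t) (γ t) = -1) {s : ℝ} (hs : s ∈ interior I) :
    mink n (γ' s) (γ s) = 0 := by
  have hnhds := mem_interior_iff_mem_nhds.mp hs
  have hsI := interior_subset hs
  have h := (((hd1 s hsI).mink (hd1 s hsI)).hasDerivAt hnhds).unique
    ((hasDerivAt_const s (-1 : ℝ)).congr_of_eventuallyEq (Filter.eventually_of_mem hnhds hhyp))
  rw [mink_comm (γ s)] at h
  linarith

lemma mink_acc_sub_self_eq_zero (hd1 : ∀ t ∈ I, HasDerivWithinAt γ (γ' t) I t)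
    (hd2 : ∀ t ∈ I, HasDerivWithinAt γ' (γ'' t) I t)
    (hhyp : ∀ t ∈ I, mink n (γ t) (γ t) = -1) (hspeed : ∀ t ∈ I, mink n (γ' t) (γ' t) = 1)
    {s : ℝ} (hs : s ∈ interior I) : mink n (γ'' s - γ s) (γ s) = 0 := by
  have hsI := interior_subset hs
  have h := (((hd2 s hsI).mink (hd1 s hsI)).hasDerivAt (mem_interior_iff_mem_nhds.mp hs)).unique
    ((hasDerivAt_const s (0 : ℝ)).congr_of_eventuallyEq
      (Filter.eventually_of_mem (isOpen_interior.mem_nhds hs) fun t ht =>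
        mink_deriv_self_eq_zero hd1 hhyp ht))
  rw [mink_sub_left, hhyp s hsI]
  linarith [hspeed s hsI]

end Curve

theorem small_acceleration_concave_side_horosphere_general
    (n : ℕ) (I : Set ℝ) (hI : I.OrdConnected)
    (γ γ' γ'' : ℝ → Fin (n + 2) → ℝ)
    (hd1 : ∀ t ∈ I, HasDerivWithinAt γ (γ' t) I t)
    (hd2 : ∀ t ∈ I, HasDerivWithinAt γ' (γ'' t) I t)
    (hhyp : ∀ t ∈ I, mink n (γ t) (γ t) = -1)
    (hspeed : ∀ t ∈ I, mink n (γ' t) (γ' t) = 1)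
    (hacc : ∀ t ∈ I, mink n (γ'' t - γ t) (γ'' t - γ t) < 1)
    (t₀ : ℝ) (ht₀ : t₀ ∈ I)
    (ξ : Fin (n + 2) → ℝ) (hξ : ξ ≠ 0) (hnull : mink n ξ ξ = 0)
    (htan : mink n (γ t₀) ξ = -1) (horth : mink n (γ' t₀) ξ = 0) :
    ∀ t ∈ I, t ≠ t₀ → mink n (γ t) ξ < -1 := by
  have hf : ∀ t ∈ I, HasDerivWithinAt (fun r => mink n (γ r) ξ) (mink n (γ' t) ξ) I t :=
    fun t ht => by simpa using (hd1 t ht).mink (hasDerivWithinAt_const t I ξ)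
  have hf' : ∀ t ∈ I, HasDerivWithinAt (fun r => mink n (γ' r) ξ) (mink n (γ'' t) ξ) I t :=
    fun t ht => by simpa using (hd2 t ht).mink (hasDerivWithinAt_const t I ξ)
  have hneg : ∀ t ∈ I, mink n (γ t) ξ < 0 := by
    intro t ht
    by_contra! h
    obtain ⟨s, hs, hs0⟩ := hI.isPreconnected.intermediate_value ht₀ ht
      (fun x hx => (hf x hx).continuousWithinAt) ⟨by rw [htan]; norm_num, h⟩
    exact mink_ne_zero_of_null (by rw [hhyp s hs]; norm_num) hξ hnull hs0
  have hconcave : ∀ s ∈ interior I, mink n (γ'' s) ξ < 0 := fun s hs => by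
    have hsI := interior_subset hs
    simpa using mink_add_lt_zero_of_null (hhyp s hsI) (mink_acc_sub_self_eq_zero hd1 hd2 hhyp
      hspeed hs) (hacc s hsI) hnull (hneg s hsI)
  have hanti : StrictAntiOn (fun r => mink n (γ' r) ξ) I :=
    strictAntiOn_of_hasDerivWithinAt_neg hI.convex (fun x hx => (hf' x hx).continuousWithinAt)
      (fun x hx => (hf' x (interior_subset hx)).mono interior_subset) hconcave
  intro t ht hne
  exact htan ▸ lt_of_hasDerivWithinAt_of_strictAntiOn hI hf hanti ht₀ horth ht hne

/-- A `C²` unit-speed curve with small acceleration in `ℍ^{n+1}` lies in the interior of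
the concave side of every tangent horosphere, except at the tangency point. -/
theorem small_acceleration_concave_side_horosphere
    (n : ℕ) (I : Set ℝ) (hI : I.OrdConnected)
    (γ γ' γ'' : ℝ → Fin (n + 2) → ℝ)
    (hd1 : ∀ t ∈ I, HasDerivWithinAt γ (γ' t) I t)
    (hd2 : ∀ t ∈ I, HasDerivWithinAt γ' (γ'' t) I t)
    (hcont : ContinuousOn γ'' I)
    (hhyp : ∀ t ∈ I, mink n (γ t) (γ t) = -1)
    (hpos : ∀ t ∈ I, 0 < γ t (Fin.last (n + 1)))
    (hspeed : ∀ t ∈ I, mink n (γ' t) (γ' t) = 1)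
    (hacc : ∀ t ∈ I, mink n (γ'' t - γ t) (γ'' t - γ t) < 1)
    (t₀ : ℝ) (ht₀ : t₀ ∈ I)
    (ξ : Fin (n + 2) → ℝ) (hξ : ξ ≠ 0) (hnull : mink n ξ ξ = 0)
    (htan : mink n (γ t₀) ξ = -1) (horth : mink n (γ' t₀) ξ = 0) :
    ∀ t ∈ I, t ≠ t₀ → mink n (γ t) ξ < -1 :=
  small_acceleration_concave_side_horosphere_general n I hI γ γ' γ'' hd1 hd2 hhyp hspeed hacc t₀ ht₀
    ξ hξ hnull htan horth
end

section
/- Let M be a smooth n-manifold and let σ, ν : M → ℝ^{n+2} be an immersion of M into ℍ^{n+1} with unit normal ν having small principal curvatures. Then the maps σ + ν and σ − ν take values in the future null cone minus the origin, i.e. ⟨σ(p) ± ν(p), σ(p) ± ν(p)⟩ = 0, σ(p) ± ν(p) ≠ 0 and (σ(p) ± ν(p))_{n+2} > 0 for all p; and both maps have injective differential at every point of M. -/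
open scoped Manifold

section Minkowski

variable {n : ℕ}

lemma mink_neg_left (x y : Fin (n + 2) → ℝ) : mink n (-x) y = -mink n x y := by
  simp only [mink, Pi.neg_apply, neg_mul, Finset.sum_neg_distrib]
  ring

lemma mink_neg_right (x y : Fin (n + 2) → ℝ) : mink n x (-y) = -mink n x y := by
  simp only [mink, Pi.neg_apply, mul_neg, Finset.sum_neg_distrib]
  ring

lemma mink_neg_neg (x y : Fin (n + 2) → ℝ) : mink n (-x) (-y) = mink n x y := by
  rw [mink_neg_left, mink_neg_right, neg_neg]

lemma mink_add_self (x y : Fin (n + 2) → ℝ) :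
    mink n (x + y) (x + y) = mink n x x + 2 * mink n x y + mink n y y := by
  simp only [mink, Pi.add_apply]
  have hsum : ∑ i : Fin (n + 1), (x i.castSucc + y i.castSucc) * (x i.castSucc + y i.castSucc) =
      ∑ i : Fin (n + 1), (x i.castSucc * x i.castSucc + 2 * (x i.castSucc * y i.castSucc) +
        y i.castSucc * y i.castSucc) :=
    Finset.sum_congr rfl fun i _ => by ring
  rw [hsum, Finset.sum_add_distrib, Finset.sum_add_distrib, ← Finset.mul_sum]
  ring

/-- Cauchy–Schwarz on the first `n + 1` coordinates gives
`(x_{n+2} y_{n+2})² ≤ (x_{n+2}² - 1) (y_{n+2}² + 1)`. -/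
lemma sq_last_lt_of_orthonormal {x y : Fin (n + 2) → ℝ} (hx : mink n x x = -1)
    (hy : mink n y y = 1) (hxy : mink n x y = 0) :
    y (Fin.last (n + 1)) ^ 2 < x (Fin.last (n + 1)) ^ 2 := by
  set a := x (Fin.last (n + 1))
  set b := y (Fin.last (n + 1))
  have hcs := Finset.sum_mul_sq_le_sq_mul_sq Finset.univ
    (fun i : Fin (n + 1) => x i.castSucc) (fun i => y i.castSucc)
  simp only [mink] at hx hy hxy
  rw [show ∑ i : Fin (n + 1), x i.castSucc * y i.castSucc = a * b by linarith,
    show ∑ i : Fin (n + 1), x i.castSucc ^ 2 = a ^ 2 - 1 by simp only [sq]; linarith,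
    show ∑ i : Fin (n + 1), y i.castSucc ^ 2 = b ^ 2 + 1 by simp only [sq]; linarith] at hcs
  nlinarith

def IsFutureNull (n : ℕ) (z : Fin (n + 2) → ℝ) : Prop :=
  mink n z z = 0 ∧ z ≠ 0 ∧ 0 < z (Fin.last (n + 1))

lemma isFutureNull_add_of_orthonormal {x y : Fin (n + 2) → ℝ} (hx : mink n x x = -1)
    (hx_pos : 0 < x (Fin.last (n + 1))) (hy : mink n y y = 1) (hxy : mink n x y = 0) :
    IsFutureNull n (x + y) := by
  have hlast : 0 < (x + y) (Fin.last (n + 1)) := by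
    have := (abs_lt_of_sq_lt_sq' (sq_last_lt_of_orthonormal hx hy hxy) hx_pos.le).1
    simp only [Pi.add_apply]
    linarith
  exact ⟨by rw [mink_add_self, hx, hy, hxy]; ring, fun h => hlast.ne' (congrFun h _), hlast⟩

lemma injective_add_of_mink_lt {E : Type*} [TopologicalSpace E] [AddCommGroup E] [Module ℝ E]
    (A B : E →L[ℝ] (Fin (n + 2) → ℝ))
    (hlt : ∀ v, v ≠ 0 → mink n (B v) (B v) < mink n (A v) (A v)) :
    Function.Injective (A + B) := by
  refine (injective_iff_map_eq_zero (A + B)).2 fun v hv => ?_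
  by_contra hv0
  have hB : B v = -A v := eq_neg_of_add_eq_zero_right hv
  exact (hlt v hv0).ne (by rw [hB, mink_neg_neg])

lemma injective_sub_of_mink_lt {E : Type*} [TopologicalSpace E] [AddCommGroup E] [Module ℝ E]
    (A B : E →L[ℝ] (Fin (n + 2) → ℝ))
    (hlt : ∀ v, v ≠ 0 → mink n (B v) (B v) < mink n (A v) (A v)) :
    Function.Injective (A - B) := by
  refine (injective_iff_map_eq_zero (A - B)).2 fun v hv => ?_
  by_contra hv0
  have hB : B v = A v := (sub_eq_zero.1 hv).symm
  exact (hlt v hv0).ne (by rw [hB])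

end Minkowski

theorem hyperbolic_gauss_maps_local_diffeos_general
    {n : ℕ} {M : Type*} [TopologicalSpace M]
    [ChartedSpace (EuclideanSpace ℝ (Fin n)) M]
    (σ ν : M → Fin (n + 2) → ℝ)
    (hσ : ContMDiff (𝓡 n) 𝓘(ℝ, Fin (n + 2) → ℝ) (⊤ : ℕ∞) σ)
    (hν : ContMDiff (𝓡 n) 𝓘(ℝ, Fin (n + 2) → ℝ) (⊤ : ℕ∞) ν)
    (hσσ : ∀ p, mink n (σ p) (σ p) = -1)
    (hpos : ∀ p, 0 < σ p (Fin.last (n + 1)))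
    (hνν : ∀ p, mink n (ν p) (ν p) = 1)
    (hσν : ∀ p, mink n (σ p) (ν p) = 0)
    (hsmall : ∀ p (v : EuclideanSpace ℝ (Fin n)), v ≠ 0 →
      mink n (mfderiv (𝓡 n) 𝓘(ℝ, Fin (n + 2) → ℝ) ν p v)
          (mfderiv (𝓡 n) 𝓘(ℝ, Fin (n + 2) → ℝ) ν p v) <
        mink n (mfderiv (𝓡 n) 𝓘(ℝ, Fin (n + 2) → ℝ) σ p v)
          (mfderiv (𝓡 n) 𝓘(ℝ, Fin (n + 2) → ℝ) σ p v)) :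
    ∀ p : M,
      mink n (σ p + ν p) (σ p + ν p) = 0 ∧
      σ p + ν p ≠ 0 ∧
      0 < (σ p + ν p) (Fin.last (n + 1)) ∧
      mink n (σ p - ν p) (σ p - ν p) = 0 ∧
      σ p - ν p ≠ 0 ∧
      0 < (σ p - ν p) (Fin.last (n + 1)) ∧
      Function.Injective
        (mfderiv (𝓡 n) 𝓘(ℝ, Fin (n + 2) → ℝ) (fun q => σ q + ν q) p) ∧
      Function.Injective
        (mfderiv (𝓡 n) 𝓘(ℝ, Fin (n + 2) → ℝ) (fun q => σ q - ν q) p) := by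
  intro p
  obtain ⟨hnull_add, hne_add, hlast_add⟩ :=
    isFutureNull_add_of_orthonormal (hσσ p) (hpos p) (hνν p) (hσν p)
  obtain ⟨hnull_sub, hne_sub, hlast_sub⟩ : IsFutureNull n (σ p - ν p) := by
    rw [sub_eq_add_neg]
    exact isFutureNull_add_of_orthonormal (hσσ p) (hpos p) (by rw [mink_neg_neg, hνν])
      (by rw [mink_neg_right, hσν, neg_zero])
  have hσd := hσ.mdifferentiableAt (x := p) (by simp)
  have hνd := hν.mdifferentiableAt (x := p) (by simp)
  refine ⟨hnull_add, hne_add, hlast_add, hnull_sub, hne_sub, hlast_sub, ?_, ?_⟩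
  · rw [show (fun q => σ q + ν q) = σ + ν from rfl, mfderiv_add hσd hνd]
    exact injective_add_of_mink_lt _ _ (hsmall p)
  · rw [show (fun q => σ q - ν q) = σ - ν from rfl, mfderiv_sub hσd hνd]
    exact injective_sub_of_mink_lt _ _ (hsmall p)

/-- If `σ : M → ℍ^{n+1}` is an immersion with unit normal `ν` having small principal
curvatures, then `σ + ν` and `σ − ν` take values in the future null cone minus the
origin, and both maps have injective differential at every point (they represent the
hyperbolic Gauss maps `G_σ^±`, which are local diffeomorphisms). -/
theorem hyperbolic_gauss_maps_local_diffeos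
    {n : ℕ} {M : Type*} [TopologicalSpace M]
    [ChartedSpace (EuclideanSpace ℝ (Fin n)) M]
    [IsManifold (𝓡 n) (⊤ : ℕ∞) M]
    (σ ν : M → Fin (n + 2) → ℝ)
    (hσ : ContMDiff (𝓡 n) 𝓘(ℝ, Fin (n + 2) → ℝ) (⊤ : ℕ∞) σ)
    (hν : ContMDiff (𝓡 n) 𝓘(ℝ, Fin (n + 2) → ℝ) (⊤ : ℕ∞) ν)
    (hσσ : ∀ p, mink n (σ p) (σ p) = -1)
    (hpos : ∀ p, 0 < σ p (Fin.last (n + 1)))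
    (hνν : ∀ p, mink n (ν p) (ν p) = 1)
    (hσν : ∀ p, mink n (σ p) (ν p) = 0)
    (himm : ∀ p, Function.Injective (mfderiv (𝓡 n) 𝓘(ℝ, Fin (n + 2) → ℝ) σ p))
    (hnormal : ∀ p (v : EuclideanSpace ℝ (Fin n)),
      mink n (mfderiv (𝓡 n) 𝓘(ℝ, Fin (n + 2) → ℝ) σ p v) (ν p) = 0)
    (hsmall : ∀ p (v : EuclideanSpace ℝ (Fin n)), v ≠ 0 →
      mink n (mfderiv (𝓡 n) 𝓘(ℝ, Fin (n + 2) → ℝ) ν p v)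
          (mfderiv (𝓡 n) 𝓘(ℝ, Fin (n + 2) → ℝ) ν p v) <
        mink n (mfderiv (𝓡 n) 𝓘(ℝ, Fin (n + 2) → ℝ) σ p v)
          (mfderiv (𝓡 n) 𝓘(ℝ, Fin (n + 2) → ℝ) σ p v)) :
    ∀ p : M,
      mink n (σ p + ν p) (σ p + ν p) = 0 ∧
      σ p + ν p ≠ 0 ∧
      0 < (σ p + ν p) (Fin.last (n + 1)) ∧
      mink n (σ p - ν p) (σ p - ν p) = 0 ∧
      σ p - ν p ≠ 0 ∧
      0 < (σ p - ν p) (Fin.last (n + 1)) ∧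
      Function.Injective
        (mfderiv (𝓡 n) 𝓘(ℝ, Fin (n + 2) → ℝ) (fun q => σ q + ν q) p) ∧
      Function.Injective
        (mfderiv (𝓡 n) 𝓘(ℝ, Fin (n + 2) → ℝ) (fun q => σ q - ν q) p) :=
  hyperbolic_gauss_maps_local_diffeos_general σ ν hσ hν hσσ hpos hνν hσν hsmall
end
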